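/- arXiv:1610.04797 — 2 statements merged into one kernel-verified Lean document; each statement's English description precedes it below -/
import Mathlib

section
/- Let A be an associative unital ℚ-algebra and let (J0, Jp, Jm, P) be an osp(1,2)-realization in A. In A ⊗ A ⊗ A, with the intermediate Casimirs Γ_S for subsets S of {1,2,3} as defined in the context, the Bannai–Ito relation {Γ12, Γ23} = Γ13 + 2*Γ2*Γ123 + 2*Γ1*Γ3 holds, where {x,y} = x*y + y*x. -/
/-!
Normal ordering. Read left to right, the relations of a realization rewrite every word in
`J0, Jp, Jm, P` into a combination of ordered words `Jp^a Jm^b J0^c P^d` with `d ≤ 1`: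
`P` moves right past `Jp, Jm` with a sign and past `J0` freely, `J0` moves right past `Jp, Jm`
up to a lower-order term, and `Jm Jp = 2 J0 - Jp Jm`. Expanding both sides of the relation
into pure tensors and normal ordering each tensor factor, the two sides become the same
ℚ-linear combination of tensors of ordered words.
-/

open scoped TensorProduct

theorem mul_mul_eq_mul_of_mul_eq {M : Type*} [Semigroup M] {a b c : M} (h : a * b = c) (x : M) :
    a * (b * x) = c * x := by
  rw [← mul_assoc, h]

structure IsOspRealization {R : Type*} [Ring R] (J0 Jp Jm P : R) : Prop where
  J0_Jp_commutator : J0 * Jp - Jp * J0 = Jp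
  J0_Jm_commutator : J0 * Jm - Jm * J0 = -Jm
  Jp_Jm_anticommutator : Jp * Jm + Jm * Jp = 2 * J0
  J0_mul_P : J0 * P = P * J0
  Jp_P_anticommutator : Jp * P + P * Jp = 0
  Jm_P_anticommutator : Jm * P + P * Jm = 0
  P_sq : P ^ 2 = 1

namespace IsOspRealization

variable {R : Type*} [Ring R] {J0 Jp Jm P : R} (h : IsOspRealization J0 Jp Jm P)
include h

theorem P_mul_P : P * P = 1 := by
  rw [← sq, h.P_sq]

theorem P_mul_Jp : P * Jp = -(Jp * P) :=
  eq_neg_of_add_eq_zero_right h.Jp_P_anticommutator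

theorem P_mul_Jm : P * Jm = -(Jm * P) :=
  eq_neg_of_add_eq_zero_right h.Jm_P_anticommutator

theorem P_mul_J0 : P * J0 = J0 * P :=
  h.J0_mul_P.symm

theorem Jm_mul_Jp : Jm * Jp = 2 * J0 - Jp * Jm :=
  eq_sub_of_add_eq' h.Jp_Jm_anticommutator

theorem J0_mul_Jp : J0 * Jp = Jp + Jp * J0 :=
  sub_eq_iff_eq_add.mp h.J0_Jp_commutator

theorem J0_mul_Jm : J0 * Jm = -Jm + Jm * J0 :=
  sub_eq_iff_eq_add.mp h.J0_Jm_commutator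

end IsOspRealization

/-- Bannai–Ito relation: {Γ12, Γ23} = Γ13 + 2*Γ2*Γ123 + 2*Γ1*Γ3 in A ⊗ A ⊗ A. -/
theorem bannai_ito_relation_12_23 {A : Type*} [Ring A] [Algebra ℚ A]
    (J0 Jp Jm P : A)
    (h1 : J0*Jp - Jp*J0 = Jp)
    (h2 : J0*Jm - Jm*J0 = -Jm)
    (h3 : Jp*Jm + Jm*Jp = 2*J0)
    (h4 : J0*P = P*J0)
    (h5 : Jp*P + P*Jp = 0)
    (h6 : Jm*P + P*Jm = 0)
    (h7 : P^2 = 1) :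
    -- intermediate Casimir operators Γ_S in A ⊗ A ⊗ A for subsets S of {1,2,3}
    let Γ1 : A ⊗[ℚ] (A ⊗[ℚ] A) :=
      (J0 ⊗ₜ[ℚ] ((1:A) ⊗ₜ[ℚ] (1:A))) * (P ⊗ₜ[ℚ] ((1:A) ⊗ₜ[ℚ] (1:A)))
        - (Jp ⊗ₜ[ℚ] ((1:A) ⊗ₜ[ℚ] (1:A))) * (Jm ⊗ₜ[ℚ] ((1:A) ⊗ₜ[ℚ] (1:A))) * (P ⊗ₜ[ℚ] ((1:A) ⊗ₜ[ℚ] (1:A)))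
        - (1/2 : ℚ) • (P ⊗ₜ[ℚ] ((1:A) ⊗ₜ[ℚ] (1:A)))
    let Γ2 : A ⊗[ℚ] (A ⊗[ℚ] A) :=
      ((1:A) ⊗ₜ[ℚ] (J0 ⊗ₜ[ℚ] (1:A))) * ((1:A) ⊗ₜ[ℚ] (P ⊗ₜ[ℚ] (1:A)))
        - ((1:A) ⊗ₜ[ℚ] (Jp ⊗ₜ[ℚ] (1:A))) * ((1:A) ⊗ₜ[ℚ] (Jm ⊗ₜ[ℚ] (1:A))) * ((1:A) ⊗ₜ[ℚ] (P ⊗ₜ[ℚ] (1:A)))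
        - (1/2 : ℚ) • ((1:A) ⊗ₜ[ℚ] (P ⊗ₜ[ℚ] (1:A)))
    let Γ3 : A ⊗[ℚ] (A ⊗[ℚ] A) :=
      ((1:A) ⊗ₜ[ℚ] ((1:A) ⊗ₜ J0)) * ((1:A) ⊗ₜ[ℚ] ((1:A) ⊗ₜ P))
        - ((1:A) ⊗ₜ[ℚ] ((1:A) ⊗ₜ Jp)) * ((1:A) ⊗ₜ[ℚ] ((1:A) ⊗ₜ Jm)) * ((1:A) ⊗ₜ[ℚ] ((1:A) ⊗ₜ P))
        - (1/2 : ℚ) • ((1:A) ⊗ₜ[ℚ] ((1:A) ⊗ₜ P))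
    let Γ12 : A ⊗[ℚ] (A ⊗[ℚ] A) :=
      (J0 ⊗ₜ[ℚ] ((1:A) ⊗ₜ[ℚ] (1:A)) + (1:A) ⊗ₜ[ℚ] (J0 ⊗ₜ[ℚ] (1:A))) * (P ⊗ₜ[ℚ] (P ⊗ₜ[ℚ] (1:A)))
        - (Jp ⊗ₜ[ℚ] (P ⊗ₜ[ℚ] (1:A)) + (1:A) ⊗ₜ[ℚ] (Jp ⊗ₜ[ℚ] (1:A)))
            * (Jm ⊗ₜ[ℚ] (P ⊗ₜ[ℚ] (1:A)) + (1:A) ⊗ₜ[ℚ] (Jm ⊗ₜ[ℚ] (1:A))) * (P ⊗ₜ[ℚ] (P ⊗ₜ[ℚ] (1:A)))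
        - (1/2 : ℚ) • (P ⊗ₜ[ℚ] (P ⊗ₜ[ℚ] (1:A)))
    let Γ13 : A ⊗[ℚ] (A ⊗[ℚ] A) :=
      (J0 ⊗ₜ[ℚ] ((1:A) ⊗ₜ[ℚ] (1:A)) + (1:A) ⊗ₜ[ℚ] ((1:A) ⊗ₜ J0)) * (P ⊗ₜ[ℚ] ((1:A) ⊗ₜ P))
        - (Jp ⊗ₜ[ℚ] (P ⊗ₜ P) + (1:A) ⊗ₜ[ℚ] ((1:A) ⊗ₜ Jp))
            * (Jm ⊗ₜ[ℚ] (P ⊗ₜ P) + (1:A) ⊗ₜ[ℚ] ((1:A) ⊗ₜ Jm)) * (P ⊗ₜ[ℚ] ((1:A) ⊗ₜ P))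
        - (1/2 : ℚ) • (P ⊗ₜ[ℚ] ((1:A) ⊗ₜ P))
    let Γ23 : A ⊗[ℚ] (A ⊗[ℚ] A) :=
      ((1:A) ⊗ₜ[ℚ] (J0 ⊗ₜ[ℚ] (1:A)) + (1:A) ⊗ₜ[ℚ] ((1:A) ⊗ₜ J0)) * ((1:A) ⊗ₜ[ℚ] (P ⊗ₜ P))
        - ((1:A) ⊗ₜ[ℚ] (Jp ⊗ₜ P) + (1:A) ⊗ₜ[ℚ] ((1:A) ⊗ₜ Jp))
            * ((1:A) ⊗ₜ[ℚ] (Jm ⊗ₜ P) + (1:A) ⊗ₜ[ℚ] ((1:A) ⊗ₜ Jm)) * ((1:A) ⊗ₜ[ℚ] (P ⊗ₜ P))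
        - (1/2 : ℚ) • ((1:A) ⊗ₜ[ℚ] (P ⊗ₜ P))
    let Γ123 : A ⊗[ℚ] (A ⊗[ℚ] A) :=
      (J0 ⊗ₜ[ℚ] ((1:A) ⊗ₜ[ℚ] (1:A)) + (1:A) ⊗ₜ[ℚ] (J0 ⊗ₜ[ℚ] (1:A)) + (1:A) ⊗ₜ[ℚ] ((1:A) ⊗ₜ J0))
          * (P ⊗ₜ[ℚ] (P ⊗ₜ P))
        - (Jp ⊗ₜ[ℚ] (P ⊗ₜ P) + (1:A) ⊗ₜ[ℚ] (Jp ⊗ₜ P) + (1:A) ⊗ₜ[ℚ] ((1:A) ⊗ₜ Jp))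
            * (Jm ⊗ₜ[ℚ] (P ⊗ₜ P) + (1:A) ⊗ₜ[ℚ] (Jm ⊗ₜ P) + (1:A) ⊗ₜ[ℚ] ((1:A) ⊗ₜ Jm))
            * (P ⊗ₜ[ℚ] (P ⊗ₜ P))
        - (1/2 : ℚ) • (P ⊗ₜ[ℚ] (P ⊗ₜ P))
    Γ12*Γ23 + Γ23*Γ12 = Γ13 + 2*Γ2*Γ123 + 2*Γ1*Γ3 := by
  have hr : IsOspRealization J0 Jp Jm P := ⟨h1, h2, h3, h4, h5, h6, h7⟩
  intro Γ1 Γ2 Γ3 Γ12 Γ13 Γ23 Γ123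
  -- `neg_tmul` produces the negation of the additive group `A ⊗[ℚ] (A ⊗[ℚ] A)`, which the
  -- generic `mul_neg` and `neg_mul` only match once their type argument is given.
  simp only [Γ1, Γ2, Γ3, Γ12, Γ13, Γ23, Γ123, Algebra.TensorProduct.tmul_mul_tmul,
    TensorProduct.tmul_add, TensorProduct.add_tmul, TensorProduct.tmul_sub,
    TensorProduct.sub_tmul, TensorProduct.tmul_neg, TensorProduct.neg_tmul,
    mul_neg (α := A ⊗[ℚ] (A ⊗[ℚ] A)), neg_mul (α := A ⊗[ℚ] (A ⊗[ℚ] A)),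
    mul_add, add_mul, sub_mul, mul_sub, mul_neg, neg_mul, smul_mul_assoc, mul_smul_comm,
    mul_assoc, one_mul, mul_one, two_mul,
    hr.P_mul_P, hr.P_mul_Jp, hr.P_mul_Jm, hr.Jm_mul_Jp, hr.J0_mul_Jp, hr.J0_mul_Jm,
    mul_mul_eq_mul_of_mul_eq hr.P_mul_Jp, mul_mul_eq_mul_of_mul_eq hr.P_mul_Jm,
    mul_mul_eq_mul_of_mul_eq hr.P_mul_J0, mul_mul_eq_mul_of_mul_eq hr.Jm_mul_Jp,
    mul_mul_eq_mul_of_mul_eq hr.J0_mul_Jp, mul_mul_eq_mul_of_mul_eq hr.J0_mul_Jm]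
  module
end

section
/- Let A be an associative unital ℚ-algebra and let (J0, Jp, Jm, P) be an osp(1,2)-realization in A. In A ⊗ A ⊗ A, with the intermediate Casimirs Γ_S for subsets S of {1,2,3} as defined in the context, the Bannai–Ito relation {Γ13, Γ23} = Γ12 + 2*Γ3*Γ123 + 2*Γ1*Γ2 holds, where {x,y} = x*y + y*x. -/
/-!
Both sides are noncommutative polynomials in the generators placed in the three tensor slots.
Oriented as rewrite rules (`P Jp ↦ -Jp P`, `Jm Jp ↦ 2 J0 - Jp Jm`, ...), the defining relations
bring every word in one slot to the ordered form `Jp^a J0^b Jm^c P^d`. After expanding both sides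
into sums of pure tensors and normal-ordering each slot, they are the same rational combination
of ordered pure tensors.
-/

open scoped TensorProduct

structure IsOsp12Realization {R : Type*} [Ring R] (J0 Jp Jm P : R) : Prop where
  J0_comm_Jp : J0 * Jp - Jp * J0 = Jp
  J0_comm_Jm : J0 * Jm - Jm * J0 = -Jm
  Jp_anticomm_Jm : Jp * Jm + Jm * Jp = 2 * J0
  J0_mul_P : J0 * P = P * J0
  Jp_anticomm_P : Jp * P + P * Jp = 0
  Jm_anticomm_P : Jm * P + P * Jm = 0
  P_sq : P ^ 2 = 1

theorem mul_mul_eq_of_mul_eq {R : Type*} [Semigroup R] {a b c : R} (h : a * b = c) (x : R) :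
    a * (b * x) = c * x := by
  rw [← mul_assoc, h]

namespace IsOsp12Realization

variable {R : Type*} [Ring R] {J0 Jp Jm P : R}

theorem P_mul_Jp (r : IsOsp12Realization J0 Jp Jm P) : P * Jp = -(Jp * P) :=
  eq_neg_of_add_eq_zero_right r.Jp_anticomm_P

theorem P_mul_Jm (r : IsOsp12Realization J0 Jp Jm P) : P * Jm = -(Jm * P) :=
  eq_neg_of_add_eq_zero_right r.Jm_anticomm_P

theorem P_mul_J0 (r : IsOsp12Realization J0 Jp Jm P) : P * J0 = J0 * P :=
  r.J0_mul_P.symm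

theorem P_mul_P (r : IsOsp12Realization J0 Jp Jm P) : P * P = 1 := by
  rw [← sq, r.P_sq]

theorem J0_mul_Jp (r : IsOsp12Realization J0 Jp Jm P) : J0 * Jp = Jp * J0 + Jp :=
  sub_eq_iff_eq_add'.mp r.J0_comm_Jp

theorem Jm_mul_J0 (r : IsOsp12Realization J0 Jp Jm P) : Jm * J0 = J0 * Jm + Jm := by
  linear_combination (norm := noncomm_ring) -r.J0_comm_Jm

theorem Jm_mul_Jp (r : IsOsp12Realization J0 Jp Jm P) : Jm * Jp = 2 * J0 - Jp * Jm :=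
  eq_sub_of_add_eq' r.Jp_anticomm_Jm

end IsOsp12Realization

/-- Bannai–Ito relation: {Γ13, Γ23} = Γ12 + 2*Γ3*Γ123 + 2*Γ1*Γ2 in A ⊗ A ⊗ A. -/
theorem bannai_ito_relation_13_23 {A : Type*} [Ring A] [Algebra ℚ A]
    (J0 Jp Jm P : A)
    (h1 : J0*Jp - Jp*J0 = Jp)
    (h2 : J0*Jm - Jm*J0 = -Jm)
    (h3 : Jp*Jm + Jm*Jp = 2*J0)
    (h4 : J0*P = P*J0)
    (h5 : Jp*P + P*Jp = 0)
    (h6 : Jm*P + P*Jm = 0)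
    (h7 : P^2 = 1) :
    -- intermediate Casimir operators Γ_S in A ⊗ A ⊗ A for subsets S of {1,2,3}
    let Γ1 : A ⊗[ℚ] (A ⊗[ℚ] A) :=
      (J0 ⊗ₜ[ℚ] ((1:A) ⊗ₜ[ℚ] (1:A))) * (P ⊗ₜ[ℚ] ((1:A) ⊗ₜ[ℚ] (1:A)))
        - (Jp ⊗ₜ[ℚ] ((1:A) ⊗ₜ[ℚ] (1:A))) * (Jm ⊗ₜ[ℚ] ((1:A) ⊗ₜ[ℚ] (1:A))) * (P ⊗ₜ[ℚ] ((1:A) ⊗ₜ[ℚ] (1:A)))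
        - (1/2 : ℚ) • (P ⊗ₜ[ℚ] ((1:A) ⊗ₜ[ℚ] (1:A)))
    let Γ2 : A ⊗[ℚ] (A ⊗[ℚ] A) :=
      ((1:A) ⊗ₜ[ℚ] (J0 ⊗ₜ[ℚ] (1:A))) * ((1:A) ⊗ₜ[ℚ] (P ⊗ₜ[ℚ] (1:A)))
        - ((1:A) ⊗ₜ[ℚ] (Jp ⊗ₜ[ℚ] (1:A))) * ((1:A) ⊗ₜ[ℚ] (Jm ⊗ₜ[ℚ] (1:A))) * ((1:A) ⊗ₜ[ℚ] (P ⊗ₜ[ℚ] (1:A)))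
        - (1/2 : ℚ) • ((1:A) ⊗ₜ[ℚ] (P ⊗ₜ[ℚ] (1:A)))
    let Γ3 : A ⊗[ℚ] (A ⊗[ℚ] A) :=
      ((1:A) ⊗ₜ[ℚ] ((1:A) ⊗ₜ J0)) * ((1:A) ⊗ₜ[ℚ] ((1:A) ⊗ₜ P))
        - ((1:A) ⊗ₜ[ℚ] ((1:A) ⊗ₜ Jp)) * ((1:A) ⊗ₜ[ℚ] ((1:A) ⊗ₜ Jm)) * ((1:A) ⊗ₜ[ℚ] ((1:A) ⊗ₜ P))
        - (1/2 : ℚ) • ((1:A) ⊗ₜ[ℚ] ((1:A) ⊗ₜ P))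
    let Γ12 : A ⊗[ℚ] (A ⊗[ℚ] A) :=
      (J0 ⊗ₜ[ℚ] ((1:A) ⊗ₜ[ℚ] (1:A)) + (1:A) ⊗ₜ[ℚ] (J0 ⊗ₜ[ℚ] (1:A))) * (P ⊗ₜ[ℚ] (P ⊗ₜ[ℚ] (1:A)))
        - (Jp ⊗ₜ[ℚ] (P ⊗ₜ[ℚ] (1:A)) + (1:A) ⊗ₜ[ℚ] (Jp ⊗ₜ[ℚ] (1:A)))
            * (Jm ⊗ₜ[ℚ] (P ⊗ₜ[ℚ] (1:A)) + (1:A) ⊗ₜ[ℚ] (Jm ⊗ₜ[ℚ] (1:A))) * (P ⊗ₜ[ℚ] (P ⊗ₜ[ℚ] (1:A)))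
        - (1/2 : ℚ) • (P ⊗ₜ[ℚ] (P ⊗ₜ[ℚ] (1:A)))
    let Γ13 : A ⊗[ℚ] (A ⊗[ℚ] A) :=
      (J0 ⊗ₜ[ℚ] ((1:A) ⊗ₜ[ℚ] (1:A)) + (1:A) ⊗ₜ[ℚ] ((1:A) ⊗ₜ J0)) * (P ⊗ₜ[ℚ] ((1:A) ⊗ₜ P))
        - (Jp ⊗ₜ[ℚ] (P ⊗ₜ P) + (1:A) ⊗ₜ[ℚ] ((1:A) ⊗ₜ Jp))
            * (Jm ⊗ₜ[ℚ] (P ⊗ₜ P) + (1:A) ⊗ₜ[ℚ] ((1:A) ⊗ₜ Jm)) * (P ⊗ₜ[ℚ] ((1:A) ⊗ₜ P))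
        - (1/2 : ℚ) • (P ⊗ₜ[ℚ] ((1:A) ⊗ₜ P))
    let Γ23 : A ⊗[ℚ] (A ⊗[ℚ] A) :=
      ((1:A) ⊗ₜ[ℚ] (J0 ⊗ₜ[ℚ] (1:A)) + (1:A) ⊗ₜ[ℚ] ((1:A) ⊗ₜ J0)) * ((1:A) ⊗ₜ[ℚ] (P ⊗ₜ P))
        - ((1:A) ⊗ₜ[ℚ] (Jp ⊗ₜ P) + (1:A) ⊗ₜ[ℚ] ((1:A) ⊗ₜ Jp))
            * ((1:A) ⊗ₜ[ℚ] (Jm ⊗ₜ P) + (1:A) ⊗ₜ[ℚ] ((1:A) ⊗ₜ Jm)) * ((1:A) ⊗ₜ[ℚ] (P ⊗ₜ P))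
        - (1/2 : ℚ) • ((1:A) ⊗ₜ[ℚ] (P ⊗ₜ P))
    let Γ123 : A ⊗[ℚ] (A ⊗[ℚ] A) :=
      (J0 ⊗ₜ[ℚ] ((1:A) ⊗ₜ[ℚ] (1:A)) + (1:A) ⊗ₜ[ℚ] (J0 ⊗ₜ[ℚ] (1:A)) + (1:A) ⊗ₜ[ℚ] ((1:A) ⊗ₜ J0))
          * (P ⊗ₜ[ℚ] (P ⊗ₜ P))
        - (Jp ⊗ₜ[ℚ] (P ⊗ₜ P) + (1:A) ⊗ₜ[ℚ] (Jp ⊗ₜ P) + (1:A) ⊗ₜ[ℚ] ((1:A) ⊗ₜ Jp))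
            * (Jm ⊗ₜ[ℚ] (P ⊗ₜ P) + (1:A) ⊗ₜ[ℚ] (Jm ⊗ₜ P) + (1:A) ⊗ₜ[ℚ] ((1:A) ⊗ₜ Jm))
            * (P ⊗ₜ[ℚ] (P ⊗ₜ P))
        - (1/2 : ℚ) • (P ⊗ₜ[ℚ] (P ⊗ₜ P))
    Γ13*Γ23 + Γ23*Γ13 = Γ12 + 2*Γ3*Γ123 + 2*Γ1*Γ2 := by
  have r : IsOsp12Realization J0 Jp Jm P := ⟨h1, h2, h3, h4, h5, h6, h7⟩
  intro Γ1 Γ2 Γ3 Γ12 Γ13 Γ23 Γ123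
  simp only [Γ1, Γ2, Γ3, Γ12, Γ13, Γ23, Γ123, two_mul, mul_add, add_mul, sub_mul, mul_sub,
    smul_mul_assoc, mul_smul_comm, mul_assoc, Algebra.TensorProduct.tmul_mul_tmul, one_mul, mul_one]
  simp only [mul_assoc, mul_one, mul_add, add_mul, mul_sub, sub_mul, neg_mul, mul_neg, neg_neg,
    two_mul, TensorProduct.tmul_add, TensorProduct.tmul_sub, TensorProduct.tmul_neg,
    TensorProduct.neg_tmul, r.P_mul_Jp, r.P_mul_Jm, r.P_mul_J0, r.P_mul_P, r.Jm_mul_J0,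
    mul_mul_eq_of_mul_eq r.P_mul_Jp, mul_mul_eq_of_mul_eq r.P_mul_Jm,
    mul_mul_eq_of_mul_eq r.P_mul_J0, mul_mul_eq_of_mul_eq r.J0_mul_Jp,
    mul_mul_eq_of_mul_eq r.Jm_mul_Jp]
  module
end
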